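/- Let N ≥ 1 be an integer, let a < b be real numbers, and let f_1, …, f_N and g_1, …, g_N be continuous real-valued functions on [a,b]. Then ∫_{[a,b]^N} det((f_i(x_j))_{1≤i,j≤N}) · det((g_i(x_j))_{1≤i,j≤N}) dx_1 ⋯ dx_N = N! · det((∫_a^b f_i(x) g_j(x) dx)_{1≤i,j≤N}). -/

import Mathlib

/-!
Expand both determinants by the Leibniz formula. Each of the resulting terms is a product of
functions of the separate coordinates, so by Fubini it integrates to `∏ j, C (σ j) (τ j)`, where
`C i k = ∫ f i * g k` is the Gram matrix. For fixed `σ` the sum over `τ` is the Leibniz expansion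
of `C` with its rows permuted by `σ`, i.e. `sign σ * det C`; the two signs cancel and each of the
`N!` permutations `σ` contributes `det C`.
-/

open MeasureTheory Matrix Equiv

namespace Matrix

variable {n R : Type*} [Fintype n] [DecidableEq n] [CommRing R]

theorem det_mul_det_eq_sum_sum (F G : Matrix n n R) :
    det F * det G = ∑ σ : Perm n, ∑ τ : Perm n,
      ((Perm.sign σ * Perm.sign τ : ℤ) : R) * ∏ j, F (σ j) j * G (τ j) j := by
  simp only [det_apply', Finset.sum_mul_sum, Int.cast_mul, Finset.prod_mul_distrib,
    mul_mul_mul_comm]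

theorem sum_sign_mul_prod_apply_perm (M : Matrix n n R) (σ : Perm n) :
    ∑ τ : Perm n, (Perm.sign τ : R) * ∏ j, M (σ j) (τ j) = Perm.sign σ * det M := by
  rw [← det_permute, ← det_transpose, det_apply']
  rfl

theorem sum_sum_sign_mul_prod_eq_factorial_mul_det (M : Matrix n n R) :
    ∑ σ : Perm n, ∑ τ : Perm n, ((Perm.sign σ * Perm.sign τ : ℤ) : R) * ∏ j, M (σ j) (τ j)
      = (Fintype.card n).factorial * det M := by
  have hσ (σ : Perm n) :
      ∑ τ : Perm n, ((Perm.sign σ * Perm.sign τ : ℤ) : R) * ∏ j, M (σ j) (τ j) = det M := by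
    simp_rw [Int.cast_mul, mul_assoc, ← Finset.mul_sum, sum_sign_mul_prod_apply_perm, ← mul_assoc,
      ← Int.cast_mul, ← Units.val_mul, Int.units_mul_self, Units.val_one, Int.cast_one, one_mul]
  simp only [hσ, Finset.sum_const, Finset.card_univ, Fintype.card_perm, nsmul_eq_mul]

end Matrix

theorem integral_pi_det_mul_det {ι α 𝕜 : Type*} [Fintype ι] [DecidableEq ι] [RCLike 𝕜]
    [MeasurableSpace α] (μ : Measure α) [SigmaFinite μ] (f g : ι → α → 𝕜)
    (hfg : ∀ i j, Integrable (fun t => f i t * g j t) μ) :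
    ∫ x, det (of fun i j => f i (x j)) * det (of fun i j => g i (x j)) ∂Measure.pi (fun _ => μ)
      = (Fintype.card ι).factorial * det (of fun i j => ∫ t, f i t * g j t ∂μ) := by
  have hint (σ τ : Perm ι) (c : 𝕜) : Integrable
      (fun x : ι → α => c * ∏ j, f (σ j) (x j) * g (τ j) (x j)) (Measure.pi fun _ => μ) :=
    (Integrable.fintype_prod fun j => hfg (σ j) (τ j)).const_mul c
  have hprod (σ τ : Perm ι) : ∫ x, ∏ j, f (σ j) (x j) * g (τ j) (x j) ∂Measure.pi (fun _ => μ)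
      = ∏ j, ∫ t, f (σ j) t * g (τ j) t ∂μ :=
    integral_fintype_prod_eq_prod fun j t => f (σ j) t * g (τ j) t
  simp only [det_mul_det_eq_sum_sum, of_apply]
  rw [integral_finsetSum _ fun σ _ => integrable_finsetSum _ fun τ _ => hint σ τ _]
  refine (Finset.sum_congr rfl fun σ _ => integral_finsetSum _ fun τ _ => hint σ τ _).trans ?_
  simp only [integral_const_mul, hprod]
  exact sum_sum_sign_mul_prod_eq_factorial_mul_det (of fun i j => ∫ t, f i t * g j t ∂μ)

theorem stmt_0 (N : ℕ) (a b : ℝ)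
    (f g : Fin N → ℝ → ℝ)
    (hf : ∀ i, ContinuousOn (f i) (Set.Icc a b))
    (hg : ∀ i, ContinuousOn (g i) (Set.Icc a b)) :
    (∫ x in (Set.univ.pi fun _ : Fin N => Set.Icc a b),
        Matrix.det (Matrix.of fun i j : Fin N => f i (x j)) *
          Matrix.det (Matrix.of fun i j : Fin N => g i (x j)))
      = (N.factorial : ℝ) *
          Matrix.det (Matrix.of fun i j : Fin N => ∫ t in Set.Icc a b, f i t * g j t) := by
  rw [volume_pi, Measure.restrict_pi_pi, integral_pi_det_mul_det, Fintype.card_fin]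
  exact fun i j => ((hf i).mul (hg j)).integrableOn_compact isCompact_Icc
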